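/- arXiv:2510.27279 — 3 statements merged into one kernel-verified Lean document; each statement's English description precedes it below -/
import Mathlib

section
/- Let G be a finite simple graph. Then φ(G) = ψ(G), where φ(G) = 2^{-3|V(G)|} · Σ_{E' ⊆ E(G)} (-2)^{|E'|} · χ₃(G|_{E'}) (the sum over all subsets E' of the edge set, G|_{E'} the spanning subgraph of G with edge set E', and χ₃ the number of proper 3-colorings), and ψ(G) = 2^{-2|V(G)|} · Σ_{U ⊆ V(G)} (-1/2)^{|V(G)|-|U|} · 2^{corank(A(G|_U))} (the sum over all subsets U of the vertex set, G|_U the induced subgraph on U, A(·) the adjacency matrix with entries in the field 𝔽₂ with two elements, and corank the corank of the matrix over 𝔽₂). -/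
open Finset

/-- The number of proper 3-colorings of the spanning subgraph of `G`
with edge set `E'` (a subset of the edge set of a simple graph on `V`). -/
def chi3 {V : Type*} [Fintype V] [DecidableEq V] (E' : Finset (Sym2 V)) : ℕ :=
  (Finset.univ.filter (fun f : V → Fin 3 => ∀ a b : V, s(a, b) ∈ E' → f a ≠ f b)).card

/-- The adjacency matrix over `𝔽₂` of the subgraph of `G` induced by the
vertex subset `U` (equivalently, the submatrix of the adjacency matrix of `G`
with rows and columns indexed by `U`). -/
def adjMatrixOn {V : Type*} [Fintype V] [DecidableEq V] (G : SimpleGraph V)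
    [DecidableRel G.Adj] (U : Finset V) : Matrix U U (ZMod 2) :=
  Matrix.of fun i j => if G.Adj (i : V) (j : V) then 1 else 0

/-- The corank over `𝔽₂` of a square matrix over `𝔽₂`, i.e. the dimension
of its kernel. -/
noncomputable def corank {m : Type*} [Fintype m] [DecidableEq m]
    (M : Matrix m m (ZMod 2)) : ℕ :=
  Module.finrank (ZMod 2) (LinearMap.ker M.mulVecLin)

/-!
Both sides equal `2 ^ (-2n) * ∑_{x : V → 𝔽₂} ∏_v w(x v, (A x) v)`, where `A` is the adjacency
matrix over `𝔽₂` and `w(a, b) = [b = 0] - [a = 0] / 2`.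

For `φ`, inclusion–exclusion over `E'` turns `∑ (-2)^|E'| χ₃(G|E')` into the sum over all maps
`f : V → {0, 1, 2}` of `(-1)^(number of bichromatic edges)`. The sign of an edge `ab` splits
between its two darts as `F(f a, f b) F(f b, f a)`, where `F(c, d) = 1` if `c = 2` and
`(-1)^[d ≠ 0]` otherwise; hence the sign of `f` is `∏_{f v ≠ 2} (-1)^((A x) v)` with
`x = [f ≠ 0]`, and the sum over the colourings `f` with a given `x` factorises over the vertices.

For `ψ`, `2 ^ corank A_U` counts the `x` supported on `U` with `A x = 0` on `U`; after exchanging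
the sums, the sum over the sets `U` compatible with a given `x` factorises over the vertices too.
-/

open Matrix

namespace AddChar

lemma map_sum_eq_prod {A M ι : Type*} [AddCommMonoid A] [CommMonoid M] (ψ : AddChar A M)
    (s : Finset ι) (f : ι → A) : ψ (∑ i ∈ s, f i) = ∏ i ∈ s, ψ (f i) := by
  classical
  induction s using Finset.induction_on with
  | empty => simp
  | insert i s hi ih => rw [sum_insert hi, prod_insert hi, map_add_eq_mul, ih]

end AddChar

def parityChar : AddChar (ZMod 2) ℚ where
  toFun b := if b = 0 then 1 else -1
  map_zero_eq_one' := if_pos rfl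
  map_add_eq_mul' a b := by fin_cases a <;> fin_cases b <;> simp +decide

lemma sum_filter_comp_eq_prod_sum {ι α β R : Type*} [Fintype ι] [DecidableEq ι] [Fintype α]
    [DecidableEq β] [CommSemiring R] (p : α → β) (x : ι → β) (h : ι → α → R) :
    ∑ f : ι → α with p ∘ f = x, ∏ i, h i (f i) = ∏ i, ∑ a with p a = x i, h i a := by
  rw [prod_univ_sum]
  congr 1
  ext f
  simp [Fintype.mem_piFinset, funext_iff]

namespace Matrix

variable {V R : Type*} [Fintype V] [CommSemiring R]

lemma mulVec_submatrix_val_restrict (A : Matrix V V R) (U : Finset V) {x : V → R}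
    (hx : ∀ v ∉ U, x v = 0) (u : U) :
    (A.submatrix (↑) (↑) *ᵥ fun w : U => x w) u = (A *ᵥ x) u := by
  simp only [mulVec, dotProduct, submatrix_apply]
  rw [sum_coe_sort U fun w => A u w * x w]
  exact sum_subset (subset_univ U) fun w _ hw => by rw [hx w hw, mul_zero]

def kerSubmatrixEquiv [DecidableEq V] (A : Matrix V V R) (U : Finset V) :
    LinearMap.ker (A.submatrix ((↑) : U → V) ((↑) : U → V)).mulVecLin ≃
      {x : V → R // (∀ v ∉ U, x v = 0) ∧ ∀ v ∈ U, (A *ᵥ x) v = 0} where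
  toFun y := ⟨fun v => if h : v ∈ U then (y : U → R) ⟨v, h⟩ else 0, fun _ hv => dif_neg hv,
    fun v hv => by
      rw [← mulVec_submatrix_val_restrict A U (fun _ hw => dif_neg hw) ⟨v, hv⟩]
      simpa only [coe_mem, dite_true, Subtype.coe_eta, mulVecLin_apply, Pi.zero_apply] using
        congrFun (LinearMap.mem_ker.1 y.2) ⟨v, hv⟩⟩
  invFun x := ⟨fun u => x.1 u, LinearMap.mem_ker.2 <| funext fun u => by
    simpa using (mulVec_submatrix_val_restrict A U x.2.1 u).trans (x.2.2 u u.2)⟩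
  left_inv y := by ext u; simp
  right_inv x := by
    ext v
    by_cases hv : v ∈ U
    · simp [hv]
    · simp [hv, x.2.1 v hv]

lemma natCard_ker_submatrix_mulVecLin [DecidableEq V] [Fintype R] [DecidableEq R]
    (A : Matrix V V R) (U : Finset V) :
    Nat.card (LinearMap.ker (A.submatrix ((↑) : U → V) ((↑) : U → V)).mulVecLin) =
      #{x : V → R | (∀ v ∉ U, x v = 0) ∧ ∀ v ∈ U, (A *ᵥ x) v = 0} := by
  rw [Nat.card_congr (kerSubmatrixEquiv A U), Nat.card_eq_fintype_card, Fintype.card_subtype]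

end Matrix

namespace SimpleGraph

variable {V M : Type*} [Fintype V] (G : SimpleGraph V) [DecidableRel G.Adj] [CommMonoid M]

lemma prod_darts_eq_prod_neighborFinset (F : V → V → M) :
    ∏ d : G.Dart, F d.fst d.snd = ∏ v, ∏ u ∈ G.neighborFinset v, F v u := by
  let e : (Σ v, G.neighborSet v) ≃ G.Dart :=
    { toFun := fun s => ⟨(s.1, s.2), s.2.2⟩, invFun := fun d => ⟨d.fst, d.snd, d.adj⟩ }
  rw [← e.prod_comp, Fintype.prod_sigma]
  exact prod_congr rfl fun v _ => (prod_subtype _ (fun u => by simp) (F v)).symm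

lemma prod_edgeFinset_eq_prod_darts [DecidableEq V] (F : V → V → M) :
    ∏ e ∈ G.edgeFinset, Sym2.lift ⟨fun a b => F a b * F b a, fun _ _ => mul_comm _ _⟩ e =
      ∏ d : G.Dart, F d.fst d.snd := by
  rw [← prod_fiberwise_of_maps_to (g := Dart.edge) (t := G.edgeFinset)
    fun d _ => mem_edgeFinset.2 d.edge_mem]
  refine prod_congr rfl fun e he => ?_
  induction e using Sym2.ind with
  | h a b =>
    let d : G.Dart := ⟨(a, b), mem_edgeFinset.1 he⟩
    rw [show s(a, b) = d.edge from rfl, d.edge_fiber, prod_pair d.symm_ne.symm]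
    rfl

end SimpleGraph

lemma sum_powerset_neg_two_pow_mul_ite_proper {V α : Type*} [Fintype V] [DecidableEq V]
    [DecidableEq α] (E : Finset (Sym2 V)) (f : V → α) :
    ∑ E' ∈ E.powerset, (-2 : ℚ) ^ #E' * (if ∀ a b, s(a, b) ∈ E' → f a ≠ f b then 1 else 0) =
      ∏ e ∈ E, if (e.map f).IsDiag then 1 else -1 := by
  have hproper (E' : Finset (Sym2 V)) :
      (∀ a b, s(a, b) ∈ E' → f a ≠ f b) ↔ ∀ e ∈ E', ¬ (e.map f).IsDiag := by
    simp [Sym2.forall]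
  have hedge (e : Sym2 V) :
      (if (e.map f).IsDiag then 1 else -1 : ℚ) = 1 + -2 * if ¬ (e.map f).IsDiag then 1 else 0 := by
    split_ifs <;> norm_num
  rw [prod_congr rfl fun e _ => hedge e, prod_one_add]
  refine sum_congr rfl fun E' _ => ?_
  simp only [prod_mul_distrib, prod_const, prod_boole, hproper]
  -- the two sides now differ only in their `Decidable` instances
  congr

lemma sum_powerset_neg_two_pow_mul_chi3 {V : Type*} [Fintype V] [DecidableEq V]
    (E : Finset (Sym2 V)) :
    ∑ E' ∈ E.powerset, (-2 : ℚ) ^ #E' * (chi3 E' : ℚ) =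
      ∑ f : V → Fin 3, ∏ e ∈ E, if (e.map f).IsDiag then 1 else -1 := by
  simp_rw [chi3, natCast_card_filter, mul_sum]
  rw [sum_comm]
  exact sum_congr rfl fun f _ => sum_powerset_neg_two_pow_mul_ite_proper E f

def nonzeroIndicator (c : Fin 3) : ZMod 2 := if c = 0 then 0 else 1

def vertexWeight (a b : ZMod 2) : ℚ :=
  (if b = 0 then 1 else 0) + -1 / 2 * (if a = 0 then 1 else 0)

lemma sum_colors_eq_two_mul_vertexWeight (a b : ZMod 2) :
    ∑ c with nonzeroIndicator c = a, (if c = 2 then 1 else parityChar b) =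
      2 * vertexWeight a b := by
  obtain rfl | rfl : a = 0 ∨ a = 1 := by decide +revert
  all_goals obtain rfl | rfl : b = 0 ∨ b = 1 := by decide +revert
  all_goals simp +decide [sum_filter, Fin.sum_univ_three, filter_eq', nonzeroIndicator,
    parityChar, vertexWeight]
  all_goals norm_num

lemma sum_powerset_mul_indicator_eq_prod_vertexWeight {V : Type*} [Fintype V] [DecidableEq V]
    (x y : V → ZMod 2) :
    ∑ U ∈ (univ : Finset V).powerset, (-(1 : ℚ) / 2) ^ (Fintype.card V - #U) *
        (if (∀ v ∉ U, x v = 0) ∧ ∀ v ∈ U, y v = 0 then 1 else 0) =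
      ∏ v, vertexWeight (x v) (y v) := by
  simp only [vertexWeight]
  rw [prod_add]
  refine sum_congr rfl fun U _ => ?_
  rw [prod_boole, prod_mul_distrib, prod_const, card_univ_sdiff, prod_boole, ite_and]
  simp only [mem_sdiff, mem_univ, true_and]
  split_ifs <;> ring

namespace SimpleGraph

variable {V : Type*} [Fintype V] [DecidableEq V] (G : SimpleGraph V) [DecidableRel G.Adj]

lemma prod_edgeFinset_sign_eq_prod_vertices (f : V → Fin 3) :
    ∏ e ∈ G.edgeFinset, (if (e.map f).IsDiag then 1 else -1 : ℚ) =
      ∏ v, if f v = 2 then 1 else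
        parityChar ((G.adjMatrix (ZMod 2) *ᵥ (nonzeroIndicator ∘ f)) v) := by
  let F (c d : Fin 3) : ℚ := if c = 2 then 1 else parityChar (nonzeroIndicator d)
  have hF (c d : Fin 3) : (if c = d then 1 else -1 : ℚ) = F c d * F d c := by
    fin_cases c <;> fin_cases d <;> simp +decide [F, nonzeroIndicator, parityChar]
  calc ∏ e ∈ G.edgeFinset, (if (e.map f).IsDiag then 1 else -1 : ℚ)
      = ∏ e ∈ G.edgeFinset,
          Sym2.lift ⟨fun a b => F (f a) (f b) * F (f b) (f a), fun _ _ => mul_comm _ _⟩ e :=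
        prod_congr rfl fun e _ => by
          induction e using Sym2.ind with
          | h a b =>
            simpa only [Sym2.map_mk, Sym2.mk_isDiag_iff, Sym2.lift_mk] using hF (f a) (f b)
    _ = ∏ v, ∏ u ∈ G.neighborFinset v, F (f v) (f u) := by
        rw [prod_edgeFinset_eq_prod_darts,
          prod_darts_eq_prod_neighborFinset G fun a b => F (f a) (f b)]
    _ = _ := prod_congr rfl fun v _ => by
        rw [adjMatrix_mulVec_apply, AddChar.map_sum_eq_prod]
        split_ifs with hv <;> simp [F, hv]

lemma sum_colorings_prod_edgeFinset_sign :
    ∑ f : V → Fin 3, ∏ e ∈ G.edgeFinset, (if (e.map f).IsDiag then 1 else -1 : ℚ) =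
      2 ^ Fintype.card V *
        ∑ x : V → ZMod 2, ∏ v, vertexWeight (x v) ((G.adjMatrix (ZMod 2) *ᵥ x) v) := by
  simp_rw [prod_edgeFinset_sign_eq_prod_vertices]
  rw [← sum_fiberwise univ fun f : V → Fin 3 => nonzeroIndicator ∘ f, mul_sum]
  refine sum_congr rfl fun x _ => ?_
  calc ∑ f : V → Fin 3 with nonzeroIndicator ∘ f = x, ∏ v, (if f v = 2 then 1 else
          parityChar ((G.adjMatrix (ZMod 2) *ᵥ (nonzeroIndicator ∘ f)) v))
      = ∑ f : V → Fin 3 with nonzeroIndicator ∘ f = x,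
          ∏ v, (if f v = 2 then 1 else parityChar ((G.adjMatrix (ZMod 2) *ᵥ x) v)) :=
        sum_congr rfl fun f hf => by rw [(mem_filter.1 hf).2]
    _ = ∏ v, ∑ c with nonzeroIndicator c = x v,
          (if c = 2 then 1 else parityChar ((G.adjMatrix (ZMod 2) *ᵥ x) v)) :=
        sum_filter_comp_eq_prod_sum nonzeroIndicator x fun v c =>
          if c = 2 then 1 else parityChar ((G.adjMatrix (ZMod 2) *ᵥ x) v)
    _ = 2 ^ Fintype.card V * ∏ v, vertexWeight (x v) ((G.adjMatrix (ZMod 2) *ᵥ x) v) := by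
        simp_rw [sum_colors_eq_two_mul_vertexWeight, prod_mul_distrib, prod_const, card_univ]

lemma two_pow_corank_adjMatrixOn (U : Finset V) :
    (2 : ℚ) ^ corank (adjMatrixOn G U) =
      #{x : V → ZMod 2 | (∀ v ∉ U, x v = 0) ∧ ∀ v ∈ U, (G.adjMatrix (ZMod 2) *ᵥ x) v = 0} := by
  rw [← natCard_ker_submatrix_mulVecLin, corank, Module.natCard_eq_pow_finrank (K := ZMod 2),
    Nat.card_zmod]
  norm_cast

lemma sum_powerset_mul_two_pow_corank :
    ∑ U ∈ (univ : Finset V).powerset,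
        (-(1 : ℚ) / 2) ^ (Fintype.card V - #U) * (2 : ℚ) ^ corank (adjMatrixOn G U) =
      ∑ x : V → ZMod 2, ∏ v, vertexWeight (x v) ((G.adjMatrix (ZMod 2) *ᵥ x) v) := by
  simp_rw [two_pow_corank_adjMatrixOn, natCast_card_filter, mul_sum]
  rw [sum_comm]
  exact sum_congr rfl fun x _ => sum_powerset_mul_indicator_eq_prod_vertexWeight x _

end SimpleGraph

theorem phi_eq_psi {V : Type*} [Fintype V] [DecidableEq V]
    (G : SimpleGraph V) [DecidableRel G.Adj] :
    (2 : ℚ) ^ (-(3 * (Fintype.card V : ℤ))) *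
      ∑ E' ∈ G.edgeFinset.powerset, (-2 : ℚ) ^ E'.card * (chi3 E' : ℚ)
    =
    (2 : ℚ) ^ (-(2 * (Fintype.card V : ℤ))) *
      ∑ U ∈ (Finset.univ : Finset V).powerset,
        (-(1 : ℚ) / 2) ^ (Fintype.card V - U.card) *
          (2 : ℚ) ^ corank (adjMatrixOn G U) := by
  rw [sum_powerset_neg_two_pow_mul_chi3, G.sum_colorings_prod_edgeFinset_sign,
    G.sum_powerset_mul_two_pow_corank, ← mul_assoc, ← zpow_natCast,
    ← zpow_add₀ two_ne_zero]
  ring_nf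
end

section
/- Let G be a finite simple graph with vertex set V(G) and edge set E(G), and define φ(G) = 2^{-3|V(G)|} · Σ_{E' ⊆ E(G)} (-2)^{|E'|} · χ₃(G|_{E'}). Then φ(G) = 2^{-3|V(G)|} · Σ_U (-1)^{|E(U, V(G)∖U)|} · 2^{|U|}, where the sum is over all subsets U ⊆ V(G) such that the induced subgraph G|_U is Eulerian, and E(U, V(G)∖U) denotes the set of edges of G with one endpoint in U and the other in V(G)∖U. -/
open Finset

/-- The set `E(U, V(G) \ U)` of edges of `G` with exactly one endpoint in `U`. -/
def cutEdges {V : Type*} [Fintype V] [DecidableEq V] (G : SimpleGraph V)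
    [DecidableRel G.Adj] (U : Finset V) : Finset (Sym2 V) :=
  G.edgeFinset.filter (fun e => ∃ a b : V, e = s(a, b) ∧ a ∈ U ∧ b ∉ U)

/-- The induced subgraph `G|_U` is Eulerian: every vertex of `G|_U` has even
degree in `G|_U`. -/
def IsEulerianInduced {V : Type*} [Fintype V] [DecidableEq V] (G : SimpleGraph V)
    [DecidableRel G.Adj] (U : Finset V) : Prop :=
  ∀ i ∈ U, Even ((U.filter (fun j => G.Adj i j)).card)

instance {V : Type*} [Fintype V] [DecidableEq V] (G : SimpleGraph V)
    [DecidableRel G.Adj] : DecidablePred (IsEulerianInduced G) := by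
  unfold IsEulerianInduced; infer_instance


/-!
Write `χ₃(G|_{E'})` as a sum over all colourings `f : V → Fin 3` and sum over `E'` first: by the
binomial theorem the left-hand sum becomes `∑_f (-1)^{#bichromatic edges of f}`. Encode `f` by its
support `U` and the set `W ⊆ U` of vertices of colour `1`; an edge is then bichromatic iff it leaves
`U` or joins `W` to `U \ W`. The handshake lemma in `G|_W` gives
`(-1)^{e(W, U \ W)} = ∏_{v ∈ W} (-1)^{deg_U v}`, so the sum over `W ⊆ U` factors as
`∏_{v ∈ U} (1 + (-1)^{deg_U v})`, which is `2^{|U|}` if `G|_U` is Eulerian and `0` otherwise.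
-/

lemma Finset.prod_one_add_neg_one_pow {ι R : Type*} [CommRing R] (s : Finset ι) (n : ι → ℕ) :
    ∏ i ∈ s, (1 + (-1 : R) ^ n i) = if ∀ i ∈ s, Even (n i) then 2 ^ #s else 0 := by
  split_ifs with h
  · rw [prod_congr rfl fun i hi => by rw [(h i hi).neg_one_pow, one_add_one_eq_two], prod_const]
  · push Not at h
    obtain ⟨i, hi, hodd⟩ := h
    exact prod_eq_zero hi (by rw [(Nat.not_even_iff_odd.mp hodd).neg_one_pow, add_neg_cancel])

section NestedColoring

variable {V : Type*} [Fintype V] [DecidableEq V]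

def nestedColoring (U W : Finset V) : V → Fin 3 :=
  fun v => if v ∈ W then 1 else if v ∈ U then 2 else 0

lemma filter_nestedColoring_ne_zero {U W : Finset V} (hWU : W ⊆ U) :
    ({v | nestedColoring U W v ≠ 0} : Finset V) = U := by
  ext v
  rw [mem_filter_univ, nestedColoring]
  split_ifs with hw hu
  · simpa using hWU hw
  · simpa using hu
  · simpa using hu

lemma filter_nestedColoring_eq_one (U W : Finset V) :
    ({v | nestedColoring U W v = 1} : Finset V) = W := by
  ext v
  by_cases hw : v ∈ W <;> by_cases hu : v ∈ U <;> simp [nestedColoring, hw, hu]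

lemma nestedColoring_filter (f : V → Fin 3) :
    nestedColoring {v | f v ≠ 0} {v | f v = 1} = f := by
  funext v
  obtain hv | hv | hv : f v = 0 ∨ f v = 1 ∨ f v = 2 := by omega
  all_goals simp [nestedColoring, hv]

lemma sum_fin_three_eq_sum_nestedColoring {M : Type*} [AddCommMonoid M]
    (F : (V → Fin 3) → M) :
    ∑ f, F f = ∑ U ∈ univ.powerset, ∑ W ∈ U.powerset, F (nestedColoring U W) := by
  rw [sum_sigma']
  refine sum_nbij'
    (fun f => (⟨({v | f v ≠ 0} : Finset V), ({v | f v = 1} : Finset V)⟩ :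
      Σ _ : Finset V, Finset V))
    (fun p => nestedColoring p.1 p.2) ?_ (fun _ _ => mem_univ _)
    (fun f _ => nestedColoring_filter f) ?_ (fun f _ => congrArg F (nestedColoring_filter f).symm)
  · intro f _
    simp only [mem_sigma, mem_powerset, subset_univ, true_and]
    exact fun v => by simp +contextual
  · rintro ⟨U, W⟩ hp
    simp only [mem_sigma, mem_powerset] at hp
    rw [filter_nestedColoring_ne_zero hp.2, filter_nestedColoring_eq_one]

end NestedColoring

namespace SimpleGraph

lemma even_sum_card_filter_adj {V : Type*} (G : SimpleGraph V) [DecidableRel G.Adj]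
    (W : Finset V) : Even (∑ v ∈ W, #{w ∈ W | G.Adj v w}) := by
  have hdeg (v : (W : Set V)) : (G.induce W).degree v = #{w ∈ W | G.Adj v w} := by
    rw [← card_neighborFinset_eq_degree]
    refine card_bij (fun w _ => w.1) ?_ ?_ ?_ <;> simp +contextual
  have handshake := (G.induce (W : Set V)).sum_degrees_eq_twice_card_edges
  simp only [hdeg] at handshake
  rw [← sum_coe_sort]
  exact ⟨_, handshake.trans (two_mul _)⟩

variable {V : Type*} [Fintype V] [DecidableEq V] (G : SimpleGraph V) [DecidableRel G.Adj]

def edgesBetween (A B : Finset V) : Finset (Sym2 V) :=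
  G.edgeFinset.filter fun e => ∃ a b : V, e = s(a, b) ∧ a ∈ A ∧ b ∈ B

variable {G} in
lemma mk_mem_edgesBetween {A B : Finset V} {x y : V} :
    s(x, y) ∈ G.edgesBetween A B ↔
      G.Adj x y ∧ (x ∈ A ∧ y ∈ B ∨ y ∈ A ∧ x ∈ B) := by
  simp only [edgesBetween, mem_filter, mem_edgeFinset, mem_edgeSet, Sym2.eq_iff]
  constructor
  · rintro ⟨hxy, a, b, ⟨rfl, rfl⟩ | ⟨rfl, rfl⟩, ha, hb⟩
    exacts [⟨hxy, .inl ⟨ha, hb⟩⟩, ⟨hxy, .inr ⟨ha, hb⟩⟩]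
  · rintro ⟨hxy, ⟨hx, hy⟩ | ⟨hy, hx⟩⟩
    exacts [⟨hxy, x, y, .inl ⟨rfl, rfl⟩, hx, hy⟩,
      ⟨hxy, y, x, .inr ⟨rfl, rfl⟩, hy, hx⟩]

lemma cutEdges_eq_edgesBetween_compl (U : Finset V) : cutEdges G U = G.edgesBetween U Uᶜ := by
  simp only [cutEdges, edgesBetween, mem_compl]

lemma card_edgesBetween {A B : Finset V} (h : Disjoint A B) :
    #(G.edgesBetween A B) = ∑ a ∈ A, #{b ∈ B | G.Adj a b} := by
  have himage : G.edgesBetween A B = (G.interedges A B).image fun p => s(p.1, p.2) := by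
    ext e
    induction e using Sym2.ind with
    | _ x y =>
      simp only [mk_mem_edgesBetween, mem_image, mem_interedges_iff, Prod.exists, Sym2.eq_iff]
      constructor
      · rintro ⟨hxy, ⟨hx, hy⟩ | ⟨hy, hx⟩⟩
        exacts [⟨x, y, ⟨hx, hy, hxy⟩, .inl ⟨rfl, rfl⟩⟩,
          ⟨y, x, ⟨hy, hx, hxy.symm⟩, .inr ⟨rfl, rfl⟩⟩]
      · rintro ⟨a, b, ⟨ha, hb, hab⟩, ⟨rfl, rfl⟩ | ⟨rfl, rfl⟩⟩
        exacts [⟨hab, .inl ⟨ha, hb⟩⟩, ⟨hab.symm, .inr ⟨ha, hb⟩⟩]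
  have hinj : Set.InjOn (fun p : V × V => s(p.1, p.2)) (G.interedges A B : Set (V × V)) := by
    rintro ⟨a, b⟩ hab ⟨c, d⟩ hcd hmk
    simp only [mem_coe, mem_interedges_iff] at hab hcd
    rcases Sym2.eq_iff.mp hmk with ⟨rfl, rfl⟩ | ⟨rfl, rfl⟩
    · rfl
    · exact absurd hcd.2.1 (Finset.disjoint_left.mp h hab.1)
  rw [himage, card_image_of_injOn hinj, interedges_def, card_filter, sum_product]
  simp only [card_filter]

def bichromaticEdges {α : Type*} [DecidableEq α] (f : V → α) : Finset (Sym2 V) :=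
  G.edgeFinset.filter fun e => ∀ a b : V, e = s(a, b) → f a ≠ f b

variable {G} in
lemma mk_mem_bichromaticEdges {α : Type*} [DecidableEq α] {f : V → α} {x y : V} :
    s(x, y) ∈ G.bichromaticEdges f ↔ G.Adj x y ∧ f x ≠ f y := by
  simp only [bichromaticEdges, mem_filter, mem_edgeFinset, mem_edgeSet, Sym2.eq_iff]
  refine and_congr_right fun _ => ⟨fun h => h x y (.inl ⟨rfl, rfl⟩), ?_⟩
  rintro hxy a b (⟨rfl, rfl⟩ | ⟨rfl, rfl⟩)
  exacts [hxy, hxy.symm]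

lemma powerset_bichromaticEdges {α : Type*} [DecidableEq α] (f : V → α) :
    (G.bichromaticEdges f).powerset
      = G.edgeFinset.powerset.filter (fun E' => ∀ a b : V, s(a, b) ∈ E' → f a ≠ f b) := by
  ext E'
  simp only [mem_filter, mem_powerset]
  constructor
  · intro hE'
    exact ⟨hE'.trans (filter_subset _ _), fun a b hab =>
      (mk_mem_bichromaticEdges.mp (hE' hab)).2⟩
  · rintro ⟨hE', hproper⟩ e he
    induction e using Sym2.ind with
    | _ x y => exact mk_mem_bichromaticEdges.mpr ⟨mem_edgeFinset.mp (hE' he), hproper x y he⟩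

lemma sum_neg_two_pow_mul_chi3 :
    ∑ E' ∈ G.edgeFinset.powerset, (-2 : ℚ) ^ #E' * (chi3 E' : ℚ)
      = ∑ f : V → Fin 3, (-1 : ℚ) ^ #(G.bichromaticEdges f) := by
  simp only [chi3, card_filter, Nat.cast_sum, Nat.cast_ite, Nat.cast_one, Nat.cast_zero,
    mul_sum, mul_ite, mul_one, mul_zero]
  rw [sum_comm]
  refine sum_congr rfl fun f _ => ?_
  rw [← sum_filter, ← powerset_bichromaticEdges]
  simpa [show (-2 : ℚ) + 1 = -1 by norm_num] using
    sum_pow_mul_eq_add_pow (-2 : ℚ) 1 (G.bichromaticEdges f)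

lemma bichromaticEdges_nestedColoring {U W : Finset V} (hWU : W ⊆ U) :
    G.bichromaticEdges (nestedColoring U W)
      = G.edgesBetween U Uᶜ ∪ G.edgesBetween W (U \ W) := by
  ext e
  induction e using Sym2.ind with
  | _ x y =>
    have hxWU := @hWU x
    have hyWU := @hWU y
    simp only [mem_union, mk_mem_bichromaticEdges, mk_mem_edgesBetween, mem_compl, mem_sdiff,
      nestedColoring]
    by_cases hxW : x ∈ W <;> by_cases hyW : y ∈ W <;> by_cases hxU : x ∈ U <;>
      by_cases hyU : y ∈ U <;> simp_all

lemma disjoint_edgesBetween_compl {A C D : Finset V} (hC : C ⊆ A) (hD : D ⊆ A) :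
    Disjoint (G.edgesBetween A Aᶜ) (G.edgesBetween C D) := by
  rw [Finset.disjoint_left]
  intro e
  induction e using Sym2.ind with
  | _ x y =>
    simp only [mk_mem_edgesBetween, mem_compl]
    have hxC := @hC x
    have hyC := @hC y
    have hxD := @hD x
    have hyD := @hD y
    tauto

lemma neg_one_pow_card_edgesBetween_sdiff {R : Type*} [CommMonoid R] [HasDistribNeg R]
    {U W : Finset V} (hWU : W ⊆ U) :
    (-1 : R) ^ #(G.edgesBetween W (U \ W)) = ∏ v ∈ W, (-1 : R) ^ #{u ∈ U | G.Adj v u} := by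
  have hsplit (v : V) :
      #{u ∈ U | G.Adj v u} = #{u ∈ U \ W | G.Adj v u} + #{u ∈ W | G.Adj v u} := by
    rw [← card_union_of_disjoint (disjoint_filter_filter sdiff_disjoint), ← filter_union,
      sdiff_union_of_subset hWU]
  rw [prod_pow_eq_pow_sum, sum_congr rfl fun v _ => hsplit v, sum_add_distrib,
    ← G.card_edgesBetween disjoint_sdiff, pow_add, (G.even_sum_card_filter_adj W).neg_one_pow,
    mul_one]

lemma sum_powerset_neg_one_pow_card_bichromaticEdges {R : Type*} [CommRing R] (U : Finset V) :
    ∑ W ∈ U.powerset, (-1 : R) ^ #(G.bichromaticEdges (nestedColoring U W))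
      = (-1) ^ #(cutEdges G U) * ∏ v ∈ U, (1 + (-1 : R) ^ #{u ∈ U | G.Adj v u}) := by
  rw [prod_one_add, mul_sum]
  refine sum_congr rfl fun W hW => ?_
  have hWU := mem_powerset.mp hW
  rw [G.bichromaticEdges_nestedColoring hWU,
    card_union_of_disjoint (G.disjoint_edgesBetween_compl hWU sdiff_subset), pow_add,
    G.neg_one_pow_card_edgesBetween_sdiff hWU, cutEdges_eq_edgesBetween_compl]

end SimpleGraph

theorem phi_eq_eulerian_sum {V : Type*} [Fintype V] [DecidableEq V]
    (G : SimpleGraph V) [DecidableRel G.Adj] :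
    (2 : ℚ) ^ (-(3 * (Fintype.card V : ℤ))) *
      ∑ E' ∈ G.edgeFinset.powerset, (-2 : ℚ) ^ E'.card * (chi3 E' : ℚ)
    =
    (2 : ℚ) ^ (-(3 * (Fintype.card V : ℤ))) *
      ∑ U ∈ (Finset.univ : Finset V).powerset.filter (IsEulerianInduced G),
        (-1 : ℚ) ^ (cutEdges G U).card * (2 : ℚ) ^ U.card := by
  congr 1
  rw [G.sum_neg_two_pow_mul_chi3, sum_fin_three_eq_sum_nestedColoring, sum_filter]
  refine sum_congr rfl fun U _ => ?_
  rw [G.sum_powerset_neg_one_pow_card_bichromaticEdges, prod_one_add_neg_one_pow]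
  simp only [IsEulerianInduced, mul_ite, mul_zero]
end

section
/- Let G be a finite simple graph with n = |V(G)| vertices, and define ψ(G) = 2^{-2n} · Σ_{U ⊆ V(G)} (-1/2)^{n-|U|} · 2^{corank(A(G|_U))}, where A(G|_U) is the adjacency matrix over 𝔽₂ of the induced subgraph G|_U. Then ψ(G) = 2^{-3n} · Σ_U (-1)^{|E(U, V(G)∖U)|} · 2^{|U|}, where the sum is over all subsets U ⊆ V(G) such that the induced subgraph G|_U is Eulerian, and E(U, V(G)∖U) denotes the set of edges of G with one endpoint in U and the other in V(G)∖U. -/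
open Finset

/-!
Write `d_S(i)` for the number of neighbours of `i` in `S`. Over `𝔽₂` the kernel of `A(G|_U)`
is identified with the subsets `S ⊆ U` such that `d_S(i)` is even for every `i ∈ U`, so
`2 ^ corank A(G|_U)` counts these `S`. Exchanging the sums over `U` and `S`, the `U` belonging
to a fixed `S` form the interval `[S, W_S]`, where `W_S` is the set of vertices with `d_S` even;
this interval is nonempty exactly when `G|_S` is Eulerian, and then the binomial theorem
evaluates the inner sum to `(-1/2) ^ |W_Sᶜ| * (1/2) ^ |W_S \ S|`. Finally
`|E(S, V ∖ S)| = ∑_{i ∉ S} d_S(i)`, whose parity is that of `|W_Sᶜ|`.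
-/

open scoped Matrix

theorem sum_Icc_pow_card_sdiff {α R : Type*} [DecidableEq α] [CommSemiring R] {s t : Finset α}
    (h : s ⊆ t) (y : R) : ∑ u ∈ Icc s t, y ^ #(t \ u) = (1 + y) ^ #(t \ s) := by
  rw [Icc_eq_image_powerset h, sum_image, ← sum_pow_mul_eq_add_pow]
  · refine sum_congr rfl fun v hv => ?_
    rw [one_pow, one_mul, ← card_sdiff_of_subset (mem_powerset.1 hv), sdiff_sdiff_left,
      sup_eq_union]
  · have hdisj {v} (hv : v ∈ (t \ s).powerset) : Disjoint s v :=
      disjoint_sdiff.mono_right (mem_powerset.1 hv)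
    intro v hv w hw hvw
    rw [← union_sdiff_cancel_left (hdisj hv), ← union_sdiff_cancel_left (hdisj hw)]
    exact congrArg (· \ s) hvw

theorem card_compl_add_card_sdiff {α : Type*} [Fintype α] [DecidableEq α] {s t : Finset α}
    (h : s ⊆ t) : #tᶜ + #(t \ s) = #sᶜ := by
  have := card_le_card h
  have := card_le_univ t
  rw [card_compl, card_compl, card_sdiff_of_subset h]
  omega

theorem two_pow_corank_eq_card {m : Type*} [Fintype m] [DecidableEq m]
    (M : Matrix m m (ZMod 2)) : 2 ^ corank M = #{x | M *ᵥ x = 0} := by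
  have h := Module.natCard_eq_pow_finrank (K := ZMod 2) (V := LinearMap.ker M.mulVecLin)
  rw [Nat.card_zmod] at h
  rw [corank, ← h, ← Fintype.card_subtype, ← Nat.card_eq_fintype_card]
  rfl

theorem two_zpow_mul_neg_half_pow_mul_half_pow {o m s n : ℕ} (h : o + m + s = n) :
    (2 : ℚ) ^ (-(2 * (n : ℤ))) * ((-(1 : ℚ) / 2) ^ o * (1 + -(1 : ℚ) / 2) ^ m)
      = 2 ^ (-(3 * (n : ℤ))) * ((-1) ^ o * 2 ^ s) := by
  have inv_two_pow (k : ℕ) : (2⁻¹ : ℚ) ^ k = 2 ^ (-(k : ℤ)) := by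
    rw [zpow_neg, zpow_natCast, inv_pow]
  rw [show (1 + -(1 : ℚ) / 2) = 2⁻¹ by norm_num, neg_div, neg_pow, one_div, inv_two_pow,
    inv_two_pow, ← zpow_natCast (2 : ℚ) s]
  calc _ = (-1) ^ o * (2 : ℚ) ^ (-(2 * (n : ℤ)) + -o + -m) := by
        rw [zpow_add₀ two_ne_zero, zpow_add₀ two_ne_zero]; ring
    _ = (-1) ^ o * (2 : ℚ) ^ (-(3 * (n : ℤ)) + s) := by congr 2; omega
    _ = _ := by rw [zpow_add₀ two_ne_zero]; ring

section Indicator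

variable {V : Type*} {U : Finset V}

def indicatorOn [DecidableEq V] (U S : Finset V) : U → ZMod 2 :=
  fun j => if (j : V) ∈ S then 1 else 0

def supportOn (x : U → ZMod 2) : Finset V :=
  ({j | x j = 1} : Finset U).map (.subtype _)

theorem supportOn_subset (x : U → ZMod 2) : supportOn x ⊆ U := by
  intro v hv
  obtain ⟨j, -, rfl⟩ := mem_map.1 hv
  exact j.2

variable [DecidableEq V]

theorem indicatorOn_supportOn (x : U → ZMod 2) : indicatorOn U (supportOn x) = x := by
  funext j
  have : x j = 0 ∨ x j = 1 := by generalize x j = a; revert a; decide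
  rcases this with h | h <;> simp [indicatorOn, supportOn, h]

theorem supportOn_indicatorOn {S : Finset V} (hS : S ⊆ U) :
    supportOn (indicatorOn U S) = S := by
  ext v
  simpa [indicatorOn, supportOn] using @hS v

end Indicator

section InducedSubgraph

variable {V : Type*} (G : SimpleGraph V) [DecidableRel G.Adj]

def degreeIn (S : Finset V) (i : V) : ℕ := #{j ∈ S | G.Adj i j}

variable [Fintype V]

def evenDegreeVerts (S : Finset V) : Finset V := {i | Even (degreeIn G S i)}

variable {G} in
@[simp]
theorem mem_evenDegreeVerts {S : Finset V} {i : V} :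
    i ∈ evenDegreeVerts G S ↔ Even (degreeIn G S i) := by
  simp [evenDegreeVerts]

variable [DecidableEq V]

theorem isEulerianInduced_iff_subset (S : Finset V) :
    IsEulerianInduced G S ↔ S ⊆ evenDegreeVerts G S := by
  simp [IsEulerianInduced, subset_iff, degreeIn]

theorem adjMatrixOn_mulVec_indicatorOn {U S : Finset V} (hS : S ⊆ U) (i : U) :
    (adjMatrixOn G U *ᵥ indicatorOn U S) i = degreeIn G S i := by
  simp only [Matrix.mulVec, dotProduct, adjMatrixOn, indicatorOn, Matrix.of_apply, mul_ite,
    mul_one, mul_zero]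
  rw [sum_coe_sort U (fun j => if j ∈ S then (if G.Adj i j then (1 : ZMod 2) else 0) else 0),
    sum_ite_mem, inter_eq_right.2 hS, sum_boole, degreeIn]

theorem adjMatrixOn_mulVec_indicatorOn_eq_zero_iff {U S : Finset V} (hS : S ⊆ U) :
    adjMatrixOn G U *ᵥ indicatorOn U S = 0 ↔ U ⊆ evenDegreeVerts G S := by
  simp [funext_iff, adjMatrixOn_mulVec_indicatorOn G hS, ZMod.natCast_eq_zero_iff_even,
    subset_iff]

theorem two_pow_corank_adjMatrixOn (U : Finset V) :
    2 ^ corank (adjMatrixOn G U) = #{S ∈ U.powerset | U ⊆ evenDegreeVerts G S} := by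
  rw [two_pow_corank_eq_card, eq_comm]
  refine card_bij' (fun S _ => indicatorOn U S) (fun x _ => supportOn x) ?_ ?_ ?_ ?_
  · intro S hS
    rw [mem_filter, mem_powerset] at hS
    simpa using (adjMatrixOn_mulVec_indicatorOn_eq_zero_iff G hS.1).2 hS.2
  · intro x hx
    rw [mem_filter, mem_powerset,
      ← adjMatrixOn_mulVec_indicatorOn_eq_zero_iff G (supportOn_subset x), indicatorOn_supportOn]
    simpa [supportOn_subset] using hx
  · intro S hS
    exact supportOn_indicatorOn (mem_powerset.1 (mem_filter.1 hS).1)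
  · intro x _
    exact indicatorOn_supportOn x
theorem card_cutEdges (S : Finset V) : #(cutEdges G S) = ∑ i ∈ Sᶜ, degreeIn G S i := by
  have : #(G.interedges Sᶜ S) = #(cutEdges G S) := by
    refine card_bij (fun p _ => s(p.1, p.2)) ?_ ?_ ?_
    · rintro ⟨i, j⟩ h
      rw [SimpleGraph.interedges_def, mem_filter, mem_product, mem_compl] at h
      simp only [cutEdges, mem_filter, SimpleGraph.mem_edgeFinset, SimpleGraph.mem_edgeSet]
      exact ⟨h.2, j, i, Sym2.eq_swap, h.1.2, h.1.1⟩
    · rintro ⟨i, j⟩ h ⟨i', j'⟩ h' heq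
      rw [SimpleGraph.interedges_def, mem_filter, mem_product, mem_compl] at h h'
      rcases Sym2.eq_iff.1 heq with ⟨rfl, rfl⟩ | ⟨rfl, rfl⟩
      · rfl
      · exact absurd h.1.2 h'.1.1
    · intro e he
      simp only [cutEdges, mem_filter, SimpleGraph.mem_edgeFinset] at he
      obtain ⟨hadj, a, b, rfl, ha, hb⟩ := he
      refine ⟨(b, a), ?_, Sym2.eq_swap⟩
      rw [SimpleGraph.interedges_def, mem_filter, mem_product, mem_compl]
      exact ⟨⟨hb, ha⟩, hadj.symm⟩
  rw [← this, SimpleGraph.interedges_def, card_filter, sum_product]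
  simp_rw [degreeIn, card_filter]

theorem neg_one_pow_card_cutEdges {R : Type*} [Monoid R] [HasDistribNeg R] {S : Finset V}
    (hS : IsEulerianInduced G S) :
    (-1 : R) ^ #(cutEdges G S) = (-1) ^ #(evenDegreeVerts G S)ᶜ := by
  rw [isEulerianInduced_iff_subset] at hS
  have : (evenDegreeVerts G S)ᶜ = {i ∈ Sᶜ | Odd (degreeIn G S i)} := by
    ext i
    have := @hS i
    simp only [mem_compl, mem_evenDegreeVerts, mem_filter, ← Nat.not_even_iff_odd] at this ⊢
    tauto
  rw [this]
  exact neg_one_pow_congr (by rw [card_cutEdges, even_sum_iff_even_card_odd])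

theorem sum_pow_mul_two_pow_corank {R : Type*} [CommSemiring R] (y : R) :
    ∑ U ∈ (univ : Finset V).powerset,
        y ^ (Fintype.card V - #U) * 2 ^ corank (adjMatrixOn G U)
      = ∑ S ∈ (univ : Finset V).powerset with IsEulerianInduced G S,
          y ^ #(evenDegreeVerts G S)ᶜ * (1 + y) ^ #(evenDegreeVerts G S \ S) := by
  calc _ = ∑ U ∈ (univ : Finset V).powerset,
          ∑ S ∈ U.powerset with U ⊆ evenDegreeVerts G S, y ^ (Fintype.card V - #U) := by
        refine sum_congr rfl fun U _ => ?_
        rw [sum_const, nsmul_eq_mul, ← two_pow_corank_adjMatrixOn, Nat.cast_pow, Nat.cast_ofNat,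
          mul_comm]
    _ = ∑ S ∈ (univ : Finset V).powerset, ∑ U ∈ Icc S (evenDegreeVerts G S),
          y ^ (Fintype.card V - #U) :=
        sum_comm' fun U S => by simp [and_comm]
    _ = _ := by
        rw [sum_filter]
        refine sum_congr rfl fun S _ => ?_
        split_ifs with hS
        · rw [isEulerianInduced_iff_subset] at hS
          rw [← sum_Icc_pow_card_sdiff hS, mul_sum]
          refine sum_congr rfl fun U hU => ?_
          rw [← pow_add, card_compl_add_card_sdiff (mem_Icc.1 hU).2, card_compl]
        · rw [Icc_eq_empty (by rwa [isEulerianInduced_iff_subset] at hS), sum_empty]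

end InducedSubgraph

theorem psi_eq_eulerian_sum {V : Type*} [Fintype V] [DecidableEq V]
    (G : SimpleGraph V) [DecidableRel G.Adj] :
    (2 : ℚ) ^ (-(2 * (Fintype.card V : ℤ))) *
      ∑ U ∈ (Finset.univ : Finset V).powerset,
        (-(1 : ℚ) / 2) ^ (Fintype.card V - U.card) *
          (2 : ℚ) ^ corank (adjMatrixOn G U)
    =
    (2 : ℚ) ^ (-(3 * (Fintype.card V : ℤ))) *
      ∑ U ∈ (Finset.univ : Finset V).powerset.filter (IsEulerianInduced G),
        (-1 : ℚ) ^ (cutEdges G U).card * (2 : ℚ) ^ U.card := by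
  rw [sum_pow_mul_two_pow_corank, mul_sum, mul_sum]
  refine sum_congr rfl fun S hS => ?_
  have hE := (mem_filter.1 hS).2
  have hSW := (isEulerianInduced_iff_subset G S).1 hE
  rw [neg_one_pow_card_cutEdges G hE]
  exact two_zpow_mul_neg_half_pow_mul_half_pow
    (by rw [card_compl_add_card_sdiff hSW, card_compl_add_card])
end
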